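/- arXiv:1302.7207 — 4 statements merged into one kernel-verified Lean document; each statement's English description precedes it below -/
import Mathlib

section
/- Let H be a Hilbert space and (Mₙ) a sequence of bounded operators on H such that Re⟨Mₙx,x⟩ ≥ c‖x‖² for all x and n, where c > 0, and such that (Mₙ⁻¹) converges in the weak operator topology to some operator M₀. Then Re⟨M₀y,y⟩ ≥ (c / sup_n ‖Mₙ‖²) ‖y‖² for all y ∈ H; in particular M₀ is invertible. -/
/-!
If `Re⟨Mx, x⟩ ≥ c‖x‖²` and `‖M‖ ≤ S`, then for `y = Mx` we get `‖y‖ ≤ S‖x‖`, hence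
`Re⟨M⁻¹y, y⟩ = Re⟨Mx, x⟩ ≥ c‖x‖² ≥ (c / S²)‖y‖²`: the inverses are uniformly accretive with
constant `c / S²`. This lower bound passes to weak operator limits, and a uniformly accretive
operator on a Hilbert space is bijective by Lax–Milgram.
-/

open Filter Topology

section

variable {𝕜 E : Type*} [RCLike 𝕜] [NormedAddCommGroup E] [InnerProductSpace 𝕜 E]

def IsUniformlyAccretive (c : ℝ) (T : E →L[𝕜] E) : Prop :=
  ∀ x, c * ‖x‖ ^ 2 ≤ RCLike.re (inner 𝕜 (T x) x)

namespace IsUniformlyAccretive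

open RCLike

variable {c : ℝ} {T : E →L[𝕜] E}

theorem mul_norm_le_norm_apply (hT : IsUniformlyAccretive c T) (x : E) : c * ‖x‖ ≤ ‖T x‖ := by
  rcases (norm_nonneg x).eq_or_lt with hx | hx
  · simp [← hx]
  refine le_of_mul_le_mul_right ?_ hx
  calc c * ‖x‖ * ‖x‖ = c * ‖x‖ ^ 2 := by ring
    _ ≤ re (inner 𝕜 (T x) x) := hT x
    _ ≤ ‖T x‖ * ‖x‖ := (re_le_norm _).trans (norm_inner_le_norm _ _)

theorem le_opNorm [Nontrivial E] (hT : IsUniformlyAccretive c T) : c ≤ ‖T‖ := by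
  obtain ⟨x, hx⟩ := exists_ne (0 : E)
  refine le_of_mul_le_mul_right ?_ (norm_pos_iff.mpr hx)
  exact (hT.mul_norm_le_norm_apply x).trans (T.le_opNorm x)

theorem bijective [CompleteSpace E] (hT : IsUniformlyAccretive c T) (hc : 0 < c) :
    Function.Bijective T := by
  let := InnerProductSpace.rclikeToReal 𝕜 E
  -- Lax–Milgram for the real bilinear form `(x, y) ↦ Re⟨Tx, y⟩`, whose Riesz operator is `T`.
  let B : E →L[ℝ] E →L[ℝ] ℝ := (innerSL ℝ).comp (T.restrictScalars ℝ)
  have hB : IsCoercive B := ⟨c, hc, fun x => by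
    simpa [B, sq, mul_assoc, real_inner_eq_re_inner 𝕜] using hT x⟩
  have hT_eq : ⇑hB.continuousLinearEquivOfBilin = T := funext fun v =>
    ext_inner_right ℝ fun w => hB.continuousLinearEquivOfBilin_apply v w
  exact hT_eq ▸ hB.continuousLinearEquivOfBilin.bijective

theorem rightInverse (hT : IsUniformlyAccretive c T) (hc : 0 ≤ c) {S : ℝ} (hS : ‖T‖ ≤ S)
    {R : E →L[𝕜] E} (hR : Function.RightInverse R T) :
    IsUniformlyAccretive (c / S ^ 2) R := by
  intro y
  have hy : ‖y‖ ^ 2 ≤ S ^ 2 * ‖R y‖ ^ 2 := by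
    rw [← mul_pow]
    refine pow_le_pow_left₀ (norm_nonneg y) ?_ 2
    calc ‖y‖ = ‖T (R y)‖ := by rw [hR]
      _ ≤ ‖T‖ * ‖R y‖ := T.le_opNorm _
      _ ≤ S * ‖R y‖ := by gcongr
  calc c / S ^ 2 * ‖y‖ ^ 2 ≤ c / S ^ 2 * (S ^ 2 * ‖R y‖ ^ 2) := by gcongr
    _ = c * ‖R y‖ ^ 2 * (S ^ 2 / S ^ 2) := by ring
    _ ≤ c * ‖R y‖ ^ 2 := mul_le_of_le_one_right (by positivity) (div_self_le_one _)
    _ ≤ re (inner 𝕜 (T (R y)) (R y)) := hT (R y)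
    _ = re (inner 𝕜 (R y) y) := by rw [hR, ← inner_conj_symm, conj_re]

theorem of_tendsto_inner {ι : Type*} {l : Filter ι} [l.NeBot] {R : ι → E →L[𝕜] E}
    (hR : ∀ i, IsUniformlyAccretive c (R i))
    (hlim : ∀ x, Tendsto (fun i => inner 𝕜 x (R i x)) l (𝓝 (inner 𝕜 x (T x)))) :
    IsUniformlyAccretive c T := by
  intro x
  have hre : Tendsto (fun i => re (inner 𝕜 x (R i x))) l (𝓝 (re (inner 𝕜 x (T x)))) :=
    (continuous_re.tendsto _).comp (hlim x)
  rw [← inner_conj_symm, conj_re]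
  refine ge_of_tendsto hre (Eventually.of_forall fun i => ?_)
  rw [← inner_conj_symm, conj_re]
  exact hR i x

end IsUniformlyAccretive

end

theorem stmt_4_general {H : Type*} [NormedAddCommGroup H] [InnerProductSpace ℂ H]
    [CompleteSpace H] (M R : ℕ → (H →L[ℂ] H)) (M₀ : H →L[ℂ] H) (c : ℝ) (hc : 0 < c)
    (hbdd : BddAbove (Set.range fun n => ‖M n‖))
    (hacc : ∀ n, ∀ x : H, c * ‖x‖ ^ 2 ≤ (inner ℂ (M n x) x : ℂ).re)
    (hinv₂ : ∀ n, ∀ y : H, M n (R n y) = y)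
    (hWOT : ∀ x y : H,
      Tendsto (fun n => (inner ℂ y (R n x) : ℂ)) atTop (nhds (inner ℂ y (M₀ x)))) :
    (∀ y : H, c / (⨆ n, ‖M n‖) ^ 2 * ‖y‖ ^ 2 ≤ (inner ℂ (M₀ y) y : ℂ).re) ∧
      Function.Bijective M₀ := by
  set S := ⨆ n, ‖M n‖
  have hM : ∀ n, IsUniformlyAccretive c (M n) := hacc
  have hM₀ : IsUniformlyAccretive (c / S ^ 2) M₀ :=
    IsUniformlyAccretive.of_tendsto_inner (l := atTop)
      (fun n => (hM n).rightInverse hc.le (le_ciSup hbdd n) (hinv₂ n)) (fun x => hWOT x x)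
  refine ⟨hM₀, ?_⟩
  rcases subsingleton_or_nontrivial H with _ | _
  · exact Function.bijective_of_subsingleton _
  have hS : 0 < S := hc.trans_le <| (hM 0).le_opNorm.trans (le_ciSup hbdd 0)
  exact hM₀.bijective (by positivity)

/-- If `(Mₙ)` is a bounded sequence of operators with `Re⟨Mₙx,x⟩ ≥ c‖x‖²` uniformly
(`c > 0`), each with bounded inverse `Rₙ`, and `Rₙ → M₀` in the weak operator topology,
then `Re⟨M₀y,y⟩ ≥ (c / supₙ‖Mₙ‖²)‖y‖²` for all `y`; in particular `M₀` is bijective. -/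
theorem stmt_4 {H : Type*} [NormedAddCommGroup H] [InnerProductSpace ℂ H]
    [CompleteSpace H] (M R : ℕ → (H →L[ℂ] H)) (M₀ : H →L[ℂ] H) (c : ℝ) (hc : 0 < c)
    (hbdd : BddAbove (Set.range fun n => ‖M n‖))
    (hacc : ∀ n, ∀ x : H, c * ‖x‖ ^ 2 ≤ (inner ℂ (M n x) x : ℂ).re)
    (hinv₁ : ∀ n, ∀ x : H, R n (M n x) = x)
    (hinv₂ : ∀ n, ∀ y : H, M n (R n y) = y)
    (hWOT : ∀ x y : H,
      Tendsto (fun n => (inner ℂ y (R n x) : ℂ)) atTop (nhds (inner ℂ y (M₀ x)))) :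
    (∀ y : H, c / (⨆ n, ‖M n‖) ^ 2 * ‖y‖ ^ 2 ≤ (inner ℂ (M₀ y) y : ℂ).re) ∧
      Function.Bijective M₀ :=
  stmt_4_general M R M₀ c hc hbdd hacc hinv₂ hWOT
end

section
/- Let a : ℝⁿ → ℂ be bounded, measurable, and ℤⁿ-periodic (a(x+k) = a(x) for all x ∈ ℝⁿ, k ∈ ℤⁿ). Then the sequence (a(k·))_{k∈ℕ} converges weakly-* in L^∞(ℝⁿ) to the constant ∫_{[0,1]ⁿ} a(y) dy, i.e., for every f ∈ L¹(ℝⁿ), ∫ a(kx) f(x) dx → (∫_{[0,1]ⁿ} a(y) dy)(∫ f(x) dx) as k → ∞. -/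
/-!
Translating `x` by `k⁻¹ • u` turns `∫ a (k • x) * f x` into `∫ a (k • x + u) * f (x + k⁻¹ • u)`,
which differs from `∫ a (k • x + u) * f x` by at most `C ‖f (· + k⁻¹ • u) - f‖₁`, `C` bounding `a`.
By continuity of translation in `L¹` this is small uniformly for `u` in the bounded unit cell `D`.
Averaging over `u ∈ D`, a set of measure one, and using Fubini gives
`∫ x, (∫ u in D, a (k • x + u)) * f x`, and by periodicity the inner integral is `∫ y in D, a y`.
-/

open Filter MeasureTheory Topology

namespace MeasureTheory

theorem Integrable.tendsto_integral_norm_comp_add_left_sub {G E : Type*} [AddGroup G]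
    [TopologicalSpace G] [IsTopologicalAddGroup G] [MeasurableSpace G] [BorelSpace G]
    {μ : Measure G} [IsLocallyFiniteMeasure μ] [μ.InnerRegularCompactLTTop] [μ.IsAddLeftInvariant]
    [NormedAddCommGroup E] {f : G → E} (hf : Integrable f μ) :
    Tendsto (fun v => ∫ x, ‖f (v + x) - f x‖ ∂μ) (𝓝 0) (𝓝 0) := by
  have : Fact ((1 : ENNReal) ≠ ⊤) := ⟨ENNReal.one_ne_top⟩
  set F := hf.toL1 f
  have hF : ∀ v : G, ‖(DomAddAct.mk v +ᵥ F) - F‖ = ∫ x, ‖f (v + x) - f x‖ ∂μ := by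
    intro v
    rw [L1.norm_eq_integral_norm]
    have hshift : (fun x => F (v + x)) =ᵐ[μ] fun x => f (v + x) :=
      (measurePreserving_add_left μ v).quasiMeasurePreserving.ae_eq_comp hf.coeFn_toL1
    refine integral_congr_ae ?_
    filter_upwards [Lp.coeFn_sub (DomAddAct.mk v +ᵥ F) F,
      DomAddAct.vadd_Lp_ae_eq (DomAddAct.mk v) F, hshift, hf.coeFn_toL1] with x h1 h2 h3 h4
    rw [h1, Pi.sub_apply, h2, h4]
    exact congrArg (fun y => ‖y - f x‖) h3
  have hcont : Tendsto (fun v : G => DomAddAct.mk v +ᵥ F) (𝓝 0) (𝓝 F) := by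
    simpa using (DomAddAct.continuous_mk.tendsto (0 : G)).vadd_const F
  simpa only [hF] using tendsto_iff_norm_sub_tendsto_zero.1 hcont

section Averaging

variable {E : Type*} [NormedAddCommGroup E] [NormedSpace ℝ E] [FiniteDimensional ℝ E]
  [MeasurableSpace E] [BorelSpace E] {μ : Measure E} [μ.IsAddHaarMeasure]

theorem Integrable.eventually_forall_integral_norm_comp_add_inv_smul_sub_le {F : Type*}
    [NormedAddCommGroup F] {f : E → F} (hf : Integrable f μ) {D : Set E}
    (hD : Bornology.IsBounded D) {ε : ℝ} (hε : 0 < ε) :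
    ∀ᶠ k : ℝ in atTop, ∀ u ∈ D, ∫ x, ‖f (x + k⁻¹ • u) - f x‖ ∂μ ≤ ε := by
  have hsmall : Tendsto (fun p : ℝ × E => p.1⁻¹ • p.2) (atTop ×ˢ 𝓟 D) (𝓝 0) :=
    (tendsto_inv_atTop_zero.comp tendsto_fst).zero_smul_isBoundedUnder_le <|
      hD.exists_norm_le.imp fun _ hR => eventually_prod_principal_iff.2 <|
        Eventually.of_forall fun _ u hu => hR u hu
  have := (hf.tendsto_integral_norm_comp_add_left_sub.comp hsmall).eventually (ge_mem_nhds hε)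
  refine (eventually_prod_principal_iff.1 this).mono fun k hk u hu => ?_
  simpa only [Function.comp_apply, add_comm] using hk u hu

variable {𝕜 : Type*} [RCLike 𝕜] {a f : E → 𝕜} {C : ℝ} {D : Set E} {m : 𝕜}

theorem setIntegral_integral_comp_add_mul (hD : μ D ≠ ⊤) (ha : Measurable a)
    (hC : ∀ x, ‖a x‖ ≤ C) (hf : Integrable f μ) (hmean : ∀ t, ∫ u in D, a (t + u) ∂μ = m)
    {φ : E → E} (hφ : Measurable φ) :
    IntegrableOn (fun u => ∫ x, a (φ x + u) * f x ∂μ) D μ ∧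
      ∫ u in D, ∫ x, a (φ x + u) * f x ∂μ ∂μ = m * ∫ x, f x ∂μ := by
  have : Fact (μ D < ⊤) := ⟨hD.lt_top⟩
  have hint : Integrable (fun p : E × E => a (φ p.2 + p.1) * f p.2) ((μ.restrict D).prod μ) :=
    (hf.comp_snd _).bdd_mul
      (ha.comp ((hφ.comp measurable_snd).add measurable_fst)).aestronglyMeasurable
      (ae_of_all _ fun _ => hC _)
  refine ⟨hint.integral_prod_left, ?_⟩
  rw [integral_integral_swap hint]
  simp_rw [integral_mul_const, hmean, integral_const_mul]

theorem norm_integral_comp_smul_mul_sub_le (hD : μ D = 1) (ha : Measurable a)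
    (hC : ∀ x, ‖a x‖ ≤ C) (hf : Integrable f μ) (hmean : ∀ t, ∫ u in D, a (t + u) ∂μ = m)
    {k : ℝ} (hk : k ≠ 0) {ε : ℝ} (hε : ∀ u ∈ D, ∫ x, ‖f (x + k⁻¹ • u) - f x‖ ∂μ ≤ ε) :
    ‖∫ x, a (k • x) * f x ∂μ - m * ∫ x, f x ∂μ‖ ≤ C * ε := by
  set T := ∫ x, a (k • x) * f x ∂μ
  have hC0 : 0 ≤ C := (norm_nonneg _).trans (hC 0)
  have : IsFiniteMeasure (μ.restrict D) := isFiniteMeasure_restrict.2 (by simp [hD])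
  obtain ⟨hint, hmid⟩ := setIntegral_integral_comp_add_mul (hD ▸ ENNReal.one_ne_top) ha hC hf
    hmean (measurable_const_smul k)
  have hclose : ∀ u ∈ D, ‖T - ∫ x, a (k • x + u) * f x ∂μ‖ ≤ C * ε := by
    intro u hu
    set w := k⁻¹ • u
    have bdd {g : E → 𝕜} (hg : Integrable g μ) : Integrable (fun x => a (k • x + u) * g x) μ :=
      hg.bdd_mul (ha.comp ((measurable_const_smul k).add_const u)).aestronglyMeasurable
        (ae_of_all _ fun _ => hC _)
    have hshift : T = ∫ x, a (k • x + u) * f (x + w) ∂μ := calc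
      T = ∫ x, a (k • (x + w)) * f (x + w) ∂μ := (integral_add_right_eq_self _ w).symm
      _ = ∫ x, a (k • x + u) * f (x + w) ∂μ := by simp_rw [smul_add, w, smul_inv_smul₀ hk]
    have hdiff : Integrable (fun x => f (x + w) - f x) μ := (hf.comp_add_right w).sub hf
    calc ‖T - ∫ x, a (k • x + u) * f x ∂μ‖
        = ‖∫ x, a (k • x + u) * (f (x + w) - f x) ∂μ‖ := by
          rw [hshift, ← integral_sub (bdd (hf.comp_add_right w)) (bdd hf)]
          simp_rw [mul_sub]
      _ ≤ ∫ x, C * ‖f (x + w) - f x‖ ∂μ :=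
          norm_integral_le_of_norm_le (hdiff.norm.const_mul C) <| ae_of_all _ fun x => by
            rw [norm_mul]; gcongr; exact hC _
      _ = C * ∫ x, ‖f (x + w) - f x‖ ∂μ := integral_const_mul C _
      _ ≤ C * ε := by gcongr; exact hε u hu
  calc ‖T - m * ∫ x, f x ∂μ‖ = ‖∫ u in D, (T - ∫ x, a (k • x + u) * f x ∂μ) ∂μ‖ := by
        rw [integral_sub (integrable_const T) hint, setIntegral_const, hmid, measureReal_def, hD]
        simp
    _ ≤ C * ε * μ.real D := norm_setIntegral_le_of_norm_le_const (by simp [hD]) hclose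
    _ = C * ε := by simp [measureReal_def, hD]

theorem tendsto_integral_comp_smul_mul (hD : μ D = 1) (hDb : Bornology.IsBounded D)
    (ha : Measurable a) (hC : ∀ x, ‖a x‖ ≤ C) (hf : Integrable f μ)
    (hmean : ∀ t, ∫ u in D, a (t + u) ∂μ = m) :
    Tendsto (fun k : ℝ => ∫ x, a (k • x) * f x ∂μ) atTop (𝓝 (m * ∫ x, f x ∂μ)) := by
  rw [tendsto_iff_norm_sub_tendsto_zero, NormedAddGroup.tendsto_nhds_zero]
  intro ε hε
  have hC1 : 0 < C + 1 := by linarith [(norm_nonneg _).trans (hC 0)]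
  filter_upwards [hf.eventually_forall_integral_norm_comp_add_inv_smul_sub_le hDb
    (div_pos hε hC1), eventually_ne_atTop 0] with k hk hk0
  calc ‖‖∫ x, a (k • x) * f x ∂μ - m * ∫ x, f x ∂μ‖‖
      ≤ C * (ε / (C + 1)) :=
        (norm_norm _).trans_le <| norm_integral_comp_smul_mul_sub_le hD ha hC hf hmean hk0 hk
    _ < (C + 1) * (ε / (C + 1)) := by gcongr; linarith
    _ = ε := mul_div_cancel₀ ε hC1.ne'

end Averaging

end MeasureTheory

namespace ZSpan

open Submodule Pointwise

theorem setIntegral_fundamentalDomain_add_left {E F ι : Type*} [NormedAddCommGroup E]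
    [NormedSpace ℝ E] [MeasurableSpace E] [BorelSpace E] [NormedAddCommGroup F] [NormedSpace ℝ F]
    [Finite ι] (b : Module.Basis ι ℝ E) (μ : Measure E) [μ.IsAddLeftInvariant] {a : E → F}
    (ha : ∀ g ∈ span ℤ (Set.range b), ∀ x, a (g + x) = a x) (t : E) :
    ∫ u in fundamentalDomain b, a (t + u) ∂μ = ∫ u in fundamentalDomain b, a u ∂μ := by
  have hD := ZSpan.isAddFundamentalDomain' b μ
  have : Countable (span ℤ (Set.range b)).toAddSubgroup :=
    inferInstanceAs (Countable (span ℤ (Set.range b)))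
  calc ∫ u in fundamentalDomain b, a (t + u) ∂μ
      = ∫ v in t +ᵥ fundamentalDomain b, a v ∂μ :=
        ((measurePreserving_add_left μ t).setIntegral_image_emb
          (measurableEmbedding_addLeft t) a _).symm
    _ = ∫ v in fundamentalDomain b, a v ∂μ :=
        (hD.vadd_of_comm t).setIntegral_eq hD fun g x => ha g g.2 x

end ZSpan

theorem add_left_eq_of_mem_span_basisFun {ι α : Type*} [Finite ι] {a : (ι → ℝ) → α}
    (hper : ∀ (x : ι → ℝ) (k : ι → ℤ), a (x + fun i => (k i : ℝ)) = a x) :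
    ∀ g ∈ Submodule.span ℤ (Set.range (Pi.basisFun ℝ ι)), ∀ x, a (g + x) = a x := by
  intro g hg x
  choose z hz using ((Pi.basisFun ℝ ι).mem_span_iff_repr_mem ℤ g).1 hg
  rw [add_comm, ← hper x z]
  congr
  exact (funext hz).symm

theorem volume_fundamentalDomain_basisFun (ι : Type*) [Fintype ι] :
    volume (ZSpan.fundamentalDomain (Pi.basisFun ℝ ι)) = 1 := by
  rw [ZSpan.fundamentalDomain_pi_basisFun, volume_pi_pi]
  simp

theorem fundamentalDomain_basisFun_ae_eq_Icc (ι : Type*) [Fintype ι] :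
    ZSpan.fundamentalDomain (Pi.basisFun ℝ ι) =ᵐ[volume] Set.Icc (0 : ι → ℝ) 1 := by
  have := congrArg SetLike.coe (Module.Basis.parallelepiped_basisFun ι)
  simp only [Module.Basis.coe_parallelepiped, TopologicalSpace.PositiveCompacts.piIcc01,
    TopologicalSpace.PositiveCompacts.coe_mk, TopologicalSpace.Compacts.coe_mk,
    Set.pi_univ_Icc] at this
  exact this ▸ ZSpan.fundamentalDomain_ae_parallelepiped _ volume

/-- Mean value theorem for periodic functions: if `a : ℝⁿ → ℂ` is bounded, measurable
and `ℤⁿ`-periodic, then `a(k·)` converges weakly-* in `L^∞` to the constant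
`∫_{[0,1]ⁿ} a`, i.e. for every integrable `f`,
`∫ a(kx) f(x) dx → (∫_{[0,1]ⁿ} a)(∫ f)` as `k → ∞`. -/
theorem stmt_7 {n : ℕ} (a : (Fin n → ℝ) → ℂ)
    (hmeas : Measurable a) (C : ℝ) (hbdd : ∀ x, ‖a x‖ ≤ C)
    (hper : ∀ (x : Fin n → ℝ) (k : Fin n → ℤ), a (x + fun i => (k i : ℝ)) = a x) :
    ∀ f : (Fin n → ℝ) → ℂ, Integrable f →
      Tendsto (fun k : ℕ => ∫ x, a ((k : ℝ) • x) * f x) atTop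
        (nhds ((∫ y in Set.Icc (0 : Fin n → ℝ) 1, a y) * ∫ x, f x)) := by
  intro f hf
  rw [← setIntegral_congr_set (fundamentalDomain_basisFun_ae_eq_Icc (Fin n))]
  exact (tendsto_integral_comp_smul_mul (volume_fundamentalDomain_basisFun (Fin n))
    (ZSpan.fundamentalDomain_isBounded _) hmeas hbdd hf
    (ZSpan.setIntegral_fundamentalDomain_add_left _ volume
      (add_left_eq_of_mem_span_basisFun hper))).comp tendsto_natCast_atTop_atTop
end

section
/- Let ν > 0 and let ∂₀⁻¹ denote the operator on L²_ν(ℝ) := L²(ℝ, e^{−2νt} dt) given by (∂₀⁻¹ f)(t) = ∫_{−∞}^t f(s) ds. Then ∂₀⁻¹ is a bounded linear operator on L²_ν(ℝ) with operator norm at most 1/ν. -/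
/-!
Cauchy–Schwarz on `(-∞, t]` against the weight `e^{νs}` gives
`|∫_{-∞}^t f|² ≤ (e^{νt}/ν) ∫_{-∞}^t |f s|² e^{-νs} ds`.
Multiplying by `e^{-2νt}`, integrating in `t` and exchanging the order of integration,
the inner integral `∫_s^∞ e^{-νt} dt = e^{-νs}/ν` supplies the second factor `1/ν`.
-/

open MeasureTheory Real Set
open scoped ENNReal

lemma ofReal_exp_mul_ofReal_exp (x y : ℝ) :
    ENNReal.ofReal (exp x) * ENNReal.ofReal (exp y) = ENNReal.ofReal (exp (x + y)) := by
  rw [← ENNReal.ofReal_mul (exp_pos x).le, exp_add]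

lemma ofReal_exp_div_two_sq (x : ℝ) :
    ENNReal.ofReal (exp (x / 2)) ^ 2 = ENNReal.ofReal (exp x) := by
  rw [sq, ofReal_exp_mul_ofReal_exp, add_halves]

lemma ofReal_exp_div {ν : ℝ} (hν : 0 < ν) (x : ℝ) :
    ENNReal.ofReal (exp x / ν) = ENNReal.ofReal ν⁻¹ * ENNReal.ofReal (exp x) := by
  rw [div_eq_inv_mul, ENNReal.ofReal_mul (inv_nonneg.2 hν.le)]

lemma lintegral_ofReal_exp_mul_Iic {a : ℝ} (ha : 0 < a) (c : ℝ) :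
    ∫⁻ x in Iic c, ENNReal.ofReal (exp (a * x)) = ENNReal.ofReal (exp (a * c) / a) := by
  rw [← ofReal_integral_eq_lintegral_ofReal (integrableOn_exp_mul_Iic ha c)
    (ae_of_all _ fun _ => (exp_pos _).le), integral_exp_mul_Iic ha]

lemma lintegral_ofReal_exp_neg_mul_Ici {a : ℝ} (ha : 0 < a) (c : ℝ) :
    ∫⁻ x in Ici c, ENNReal.ofReal (exp (-(a * x))) = ENNReal.ofReal (exp (-(a * c)) / a) := by
  have ha' : -a < 0 := neg_neg_of_pos ha
  simp_rw [← neg_mul]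
  rw [← setLIntegral_congr Ioi_ae_eq_Ici, ← ofReal_integral_eq_lintegral_ofReal
    (integrableOn_exp_mul_Ioi ha' c) (ae_of_all _ fun _ => (exp_pos _).le),
    integral_exp_mul_Ioi ha', neg_div_neg_eq]

lemma ENNReal.sq_lintegral_mul_le {α : Type*} [MeasurableSpace α] (μ : Measure α)
    {g h : α → ℝ≥0∞} (hg : AEMeasurable g μ) (hh : AEMeasurable h μ) :
    (∫⁻ x, g x * h x ∂μ) ^ 2 ≤ (∫⁻ x, g x ^ 2 ∂μ) * ∫⁻ x, h x ^ 2 ∂μ := by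
  calc (∫⁻ x, g x * h x ∂μ) ^ 2
      ≤ ((∫⁻ x, g x ^ (2 : ℝ) ∂μ) ^ (1 / (2 : ℝ)) *
          (∫⁻ x, h x ^ (2 : ℝ) ∂μ) ^ (1 / (2 : ℝ))) ^ 2 :=
        pow_le_pow_left' (ENNReal.lintegral_mul_le_Lp_mul_Lq μ .two_two hg hh) 2
    _ = (∫⁻ x, g x ^ 2 ∂μ) * ∫⁻ x, h x ^ 2 ∂μ := by
        simp only [ENNReal.rpow_two]
        rw [mul_pow, ← ENNReal.rpow_natCast, ← ENNReal.rpow_natCast, ← ENNReal.rpow_mul,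
          ← ENNReal.rpow_mul]
        norm_num

lemma lintegral_lintegral_Iic_mul {G w : ℝ → ℝ≥0∞} (hG : Measurable G) (hw : Measurable w) :
    ∫⁻ t, (∫⁻ s in Iic t, G s) * w t = ∫⁻ s, G s * ∫⁻ t in Ici s, w t := by
  have hmeas : Measurable (Function.uncurry fun t s => (Iic t).indicator G s * w t) := by
    simp only [indicator, mem_Iic]
    exact (Measurable.ite (measurableSet_le measurable_snd measurable_fst)
      (hG.comp measurable_snd) measurable_const).mul (hw.comp measurable_fst)
  calc ∫⁻ t, (∫⁻ s in Iic t, G s) * w t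
      = ∫⁻ t, ∫⁻ s, (Iic t).indicator G s * w t := by
        congr 1 with t
        rw [lintegral_mul_const _ (hG.indicator measurableSet_Iic),
          lintegral_indicator measurableSet_Iic]
    _ = ∫⁻ s, ∫⁻ t, (Ici s).indicator (fun t => G s * w t) t := by
        rw [lintegral_lintegral_swap hmeas.aemeasurable]
        congr 1 with s
        congr 1 with t
        by_cases hst : s ≤ t <;> simp [hst]
    _ = ∫⁻ s, G s * ∫⁻ t in Ici s, w t := by
        congr 1 with s
        rw [lintegral_indicator measurableSet_Ici, lintegral_const_mul _ hw]

section WeightedIntegral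

variable {E : Type*} [NormedAddCommGroup E] [NormedSpace ℝ E] {ν : ℝ} {f : ℝ → E}

lemma enorm_setIntegral_Iic_sq_le (hν : 0 < ν) (hf : AEStronglyMeasurable f) (t : ℝ) :
    ‖∫ s in Iic t, f s‖ₑ ^ 2 ≤
      (∫⁻ s in Iic t, ‖f s‖ₑ ^ 2 * ENNReal.ofReal (exp (-(ν * s)))) *
        ENNReal.ofReal (exp (ν * t) / ν) := by
  have hsplit : ∀ s, ‖f s‖ₑ =
      ‖f s‖ₑ * ENNReal.ofReal (exp (-(ν * s) / 2)) * ENNReal.ofReal (exp (ν * s / 2)) := by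
    intro s
    rw [mul_assoc, ofReal_exp_mul_ofReal_exp, ← add_div, neg_add_cancel, zero_div, exp_zero,
      ENNReal.ofReal_one, mul_one]
  calc ‖∫ s in Iic t, f s‖ₑ ^ 2
      ≤ (∫⁻ s in Iic t, ‖f s‖ₑ) ^ 2 := pow_le_pow_left' (enorm_integral_le_lintegral_enorm f) 2
    _ = (∫⁻ s in Iic t,
          ‖f s‖ₑ * ENNReal.ofReal (exp (-(ν * s) / 2)) * ENNReal.ofReal (exp (ν * s / 2))) ^ 2 := by
        simp_rw [← hsplit]
    _ ≤ (∫⁻ s in Iic t, (‖f s‖ₑ * ENNReal.ofReal (exp (-(ν * s) / 2))) ^ 2) *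
          ∫⁻ s in Iic t, ENNReal.ofReal (exp (ν * s / 2)) ^ 2 :=
        ENNReal.sq_lintegral_mul_le _ (hf.enorm.restrict.mul (by fun_prop)) (by fun_prop)
    _ = (∫⁻ s in Iic t, ‖f s‖ₑ ^ 2 * ENNReal.ofReal (exp (-(ν * s)))) *
          ENNReal.ofReal (exp (ν * t) / ν) := by
        simp_rw [mul_pow, ofReal_exp_div_two_sq]
        rw [lintegral_ofReal_exp_mul_Iic hν]

lemma enorm_setIntegral_Iic_sq_mul_exp_le (hν : 0 < ν) (hf : AEStronglyMeasurable f) (t : ℝ) :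
    ‖∫ s in Iic t, f s‖ₑ ^ 2 * ENNReal.ofReal (exp (-(2 * ν * t))) ≤
      ENNReal.ofReal ν⁻¹ * ((∫⁻ s in Iic t, ‖f s‖ₑ ^ 2 * ENNReal.ofReal (exp (-(ν * s)))) *
        ENNReal.ofReal (exp (-(ν * t)))) := by
  set A := ∫⁻ s in Iic t, ‖f s‖ₑ ^ 2 * ENNReal.ofReal (exp (-(ν * s)))
  calc ‖∫ s in Iic t, f s‖ₑ ^ 2 * ENNReal.ofReal (exp (-(2 * ν * t)))
      ≤ A * ENNReal.ofReal (exp (ν * t) / ν) * ENNReal.ofReal (exp (-(2 * ν * t))) :=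
        mul_le_mul_left (enorm_setIntegral_Iic_sq_le hν hf t) _
    _ = ENNReal.ofReal ν⁻¹ *
          (A * (ENNReal.ofReal (exp (ν * t)) * ENNReal.ofReal (exp (-(2 * ν * t))))) := by
        rw [ofReal_exp_div hν]
        ring
    _ = ENNReal.ofReal ν⁻¹ * (A * ENNReal.ofReal (exp (-(ν * t)))) := by
        rw [ofReal_exp_mul_ofReal_exp]
        ring_nf

end WeightedIntegral

theorem stmt_9_general (ν : ℝ) (hν : 0 < ν) (f : ℝ → ℂ) (hf : Measurable f) :
    ∫⁻ t, (‖∫ s in Set.Iic t, f s‖₊ : ENNReal) ^ 2 * ENNReal.ofReal (Real.exp (-(2 * ν * t)))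
      ≤ ENNReal.ofReal ((1 / ν) ^ 2) *
        ∫⁻ t, (‖f t‖₊ : ENNReal) ^ 2 * ENNReal.ofReal (Real.exp (-(2 * ν * t))) := by
  simp only [← enorm_eq_nnnorm]
  calc _ ≤ ∫⁻ t, ENNReal.ofReal ν⁻¹ *
          ((∫⁻ s in Iic t, ‖f s‖ₑ ^ 2 * ENNReal.ofReal (exp (-(ν * s)))) *
            ENNReal.ofReal (exp (-(ν * t)))) :=
        lintegral_mono (enorm_setIntegral_Iic_sq_mul_exp_le hν hf.aestronglyMeasurable)
    _ = ENNReal.ofReal ν⁻¹ *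
          ∫⁻ s, ‖f s‖ₑ ^ 2 * ENNReal.ofReal (exp (-(ν * s))) *
            ENNReal.ofReal (exp (-(ν * s)) / ν) := by
        rw [lintegral_const_mul' _ _ ENNReal.ofReal_ne_top,
          lintegral_lintegral_Iic_mul (by fun_prop) (by fun_prop)]
        simp_rw [lintegral_ofReal_exp_neg_mul_Ici hν]
    _ = _ := by
        rw [one_div, sq, ENNReal.ofReal_mul (inv_nonneg.2 hν.le), mul_assoc]
        congr 1
        rw [← lintegral_const_mul' _ _ ENNReal.ofReal_ne_top]
        congr 1 with s
        rw [ofReal_exp_div hν, mul_left_comm, mul_assoc, ofReal_exp_mul_ofReal_exp]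
        ring_nf

/-- The integration operator `∂₀⁻¹ : f ↦ (t ↦ ∫_{−∞}^t f)` is bounded on the
exponentially weighted space `L²_ν(ℝ) = L²(ℝ, e^{−2νt} dt)` with norm at most `1/ν`:
for every `f` with finite weighted `L²`-norm,
`∫ ‖∫_{−∞}^t f‖² e^{−2νt} dt ≤ (1/ν)² ∫ ‖f‖² e^{−2νt} dt`. -/
theorem stmt_9 (ν : ℝ) (hν : 0 < ν) (f : ℝ → ℂ) (hf : Measurable f)
    (hfL2 : ∫⁻ t, (‖f t‖₊ : ENNReal) ^ 2 * ENNReal.ofReal (Real.exp (-(2 * ν * t))) < ⊤) :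
    ∫⁻ t, (‖∫ s in Set.Iic t, f s‖₊ : ENNReal) ^ 2 * ENNReal.ofReal (Real.exp (-(2 * ν * t)))
      ≤ ENNReal.ofReal ((1 / ν) ^ 2) *
        ∫⁻ t, (‖f t‖₊ : ENNReal) ^ 2 * ENNReal.ofReal (Real.exp (-(2 * ν * t))) :=
  stmt_9_general ν hν f hf
end

section
/- Let ν > 0, h ∈ ℝ, and let τ_{−h} denote translation (τ_{−h}f)(t) = f(t−h) on L²_ν(ℝ). Then τ_{−h} = L_ν^* e^{−h(im+ν)} L_ν, where L_ν is the Fourier–Laplace transform (the unitary extension of φ ↦ (x ↦ (2π)^{−1/2} ∫ e^{−ixy−νy}φ(y)dy)) and e^{−h(im+ν)} is multiplication by t ↦ e^{−h(it+ν)} on L²(ℝ). In particular τ_{−h} is bounded on L²_ν(ℝ) with norm e^{−hν}. -/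
open MeasureTheory

/-- The Fourier–Laplace transform `L_ν φ (x) = (2π)^{−1/2} ∫ e^{−ixy−νy} φ(y) dy`. -/
noncomputable def fourierLaplace (ν : ℝ) (φ : ℝ → ℂ) : ℝ → ℂ := fun x =>
  (1 / Real.sqrt (2 * Real.pi) : ℝ) •
    ∫ y : ℝ, Complex.exp (-(Complex.I * x * y) - ν * y) * φ y

/-! The weight `e^{c t}` is a character of translation: after the substitution `t ↦ t + h` it
pulls out as the constant `e^{c h}`, both against the kernel `e^{−(ix+ν)t}` of `L_ν` and against
the weight `e^{−2νt}` of `L²_ν(ℝ)`. -/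

section TranslationAgainstExponentialWeight

variable (μ : Measure ℝ) [μ.IsAddRightInvariant]

theorem integral_cexp_mul_smul_comp_sub {E : Type*} [NormedAddCommGroup E] [NormedSpace ℂ E]
    (c : ℂ) (f : ℝ → E) (h : ℝ) :
    ∫ t, Complex.exp (c * t) • f (t - h) ∂μ
      = Complex.exp (c * h) • ∫ t, Complex.exp (c * t) • f t ∂μ := by
  rw [← integral_smul, ← integral_add_right_eq_self _ h]
  congr 1 with t
  rw [add_sub_cancel_right, smul_smul, ← Complex.exp_add, Complex.ofReal_add, mul_add, add_comm]

theorem lintegral_comp_sub_mul_exp (a : ℝ) (f : ℝ → ENNReal) (h : ℝ) :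
    ∫⁻ t, f (t - h) * ENNReal.ofReal (Real.exp (a * t)) ∂μ
      = ENNReal.ofReal (Real.exp (a * h)) * ∫⁻ t, f t * ENNReal.ofReal (Real.exp (a * t)) ∂μ := by
  rw [← lintegral_const_mul' _ _ ENNReal.ofReal_ne_top, ← lintegral_add_right_eq_self _ h]
  congr 1 with t
  rw [add_sub_cancel_right, mul_add, Real.exp_add, ENNReal.ofReal_mul (Real.exp_nonneg _)]
  ring

end TranslationAgainstExponentialWeight

theorem fourierLaplace_eq_integral_cexp_mul (ν : ℝ) (φ : ℝ → ℂ) (x : ℝ) :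
    fourierLaplace ν φ x = (1 / Real.sqrt (2 * Real.pi) : ℝ) •
      ∫ y : ℝ, Complex.exp ((-(Complex.I * x) - ν) * y) • φ y := by
  simp only [fourierLaplace, smul_eq_mul, sub_mul, neg_mul]

theorem fourierLaplace_comp_sub (ν h : ℝ) (φ : ℝ → ℂ) (x : ℝ) :
    fourierLaplace ν (fun t => φ (t - h)) x =
      Complex.exp (-(h : ℂ) * (Complex.I * x + ν)) * fourierLaplace ν φ x := by
  rw [fourierLaplace_eq_integral_cexp_mul, fourierLaplace_eq_integral_cexp_mul,
    integral_cexp_mul_smul_comp_sub, smul_comm, smul_eq_mul]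
  ring_nf

theorem stmt_18_general (ν : ℝ) (h : ℝ) :
    (∀ φ : ℝ → ℂ, Measurable φ →
      Integrable (fun y : ℝ => Complex.exp (-(ν : ℂ) * y) * φ y) →
      ∀ x : ℝ,
        fourierLaplace ν (fun t => φ (t - h)) x =
          Complex.exp (-(h : ℂ) * (Complex.I * x + ν)) * fourierLaplace ν φ x) ∧
    (∀ φ : ℝ → ℂ,
      ∫⁻ t, (‖φ (t - h)‖₊ : ENNReal) ^ 2 * ENNReal.ofReal (Real.exp (-(2 * ν * t)))
        = ENNReal.ofReal (Real.exp (-(2 * h * ν))) *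
          ∫⁻ t, (‖φ t‖₊ : ENNReal) ^ 2 * ENNReal.ofReal (Real.exp (-(2 * ν * t)))) := by
  refine ⟨fun φ _ _ x => fourierLaplace_comp_sub ν h φ x, fun φ => ?_⟩
  rw [mul_right_comm 2 h ν]
  simpa only [neg_mul] using
    lintegral_comp_sub_mul_exp volume (-(2 * ν)) (fun t => (‖φ t‖₊ : ENNReal) ^ 2) h

/-- Translation is unitarily equivalent, via the Fourier–Laplace transform `L_ν`, to
multiplication by `e^{−h(it+ν)}`: `L_ν (τ_{−h} φ) = e^{−h(im+ν)} L_ν φ`, i.e.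
`τ_{−h} = L_ν^* e^{−h(im+ν)} L_ν`. In particular `τ_{−h}` is bounded on `L²_ν(ℝ)`
with norm `e^{−hν}`:  `∫‖φ(t−h)‖²e^{−2νt} dt = e^{−2hν} ∫‖φ‖²e^{−2νt} dt`. -/
theorem stmt_18 (ν : ℝ) (hν : 0 < ν) (h : ℝ) :
    (∀ φ : ℝ → ℂ, Measurable φ →
      Integrable (fun y : ℝ => Complex.exp (-(ν : ℂ) * y) * φ y) →
      ∀ x : ℝ,
        fourierLaplace ν (fun t => φ (t - h)) x =
          Complex.exp (-(h : ℂ) * (Complex.I * x + ν)) * fourierLaplace ν φ x) ∧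
    (∀ φ : ℝ → ℂ,
      ∫⁻ t, (‖φ (t - h)‖₊ : ENNReal) ^ 2 * ENNReal.ofReal (Real.exp (-(2 * ν * t)))
        = ENNReal.ofReal (Real.exp (-(2 * h * ν))) *
          ∫⁻ t, (‖φ t‖₊ : ENNReal) ^ 2 * ENNReal.ofReal (Real.exp (-(2 * ν * t)))) :=
  stmt_18_general ν h
end
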